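/- Let (A,B,C) be a bipartite LR triple on V with J as defined, and let α_out, α_in, β_out, β_in, γ_out, γ_in be nonzero scalars in F. Set A' = α_out·AJ + α_in·A(I−J), B' = β_out·BJ + β_in·B(I−J), C' = γ_out·CJ + γ_in·C(I−J). Then A'B'C'J = α_out·β_in·γ_out·ABCJ and A'C'B'J = α_out·γ_in·β_out·ACBJ; in particular A'B'C'J is a nonzero scalar multiple of ABCJ and A'C'B'J is a nonzero scalar multiple of ACBJ. -/

import Mathlib

/-- A decomposition of `V` of diameter `d`: a sequence of one-dimensional subspaces
`sub 0, …, sub d` whose (direct) sum is `V`; by convention `sub i = ⊥` for `i > d`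
(encoding `V_{-1} = 0` and `V_{d+1} = 0`). -/
structure LRDecomp (F : Type*) [Field F] (V : Type*) [AddCommGroup V] [Module F V]
    (d : ℕ) where
  sub : ℕ → Submodule F V
  finrank_eq_one : ∀ i ≤ d, Module.finrank F (sub i) = 1
  eq_bot_of_gt : ∀ i, d < i → sub i = ⊥
  isInternal : DirectSum.IsInternal fun i : Fin (d + 1) => sub i.val

variable {F : Type*} [Field F] {V : Type*} [AddCommGroup V] [Module F V]

/-- `A` lowers the decomposition: `A V_i = V_{i-1}` for `0 ≤ i ≤ d` (with `V_{-1} = 0`). -/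
def Lowers {d : ℕ} (A : Module.End F V) (D : LRDecomp F V d) : Prop :=
  Submodule.map A (D.sub 0) = ⊥ ∧ ∀ i < d, Submodule.map A (D.sub (i + 1)) = D.sub i

/-- `B` raises the decomposition: `B V_i = V_{i+1}` for `0 ≤ i ≤ d` (with `V_{d+1} = 0`). -/
def Raises {d : ℕ} (B : Module.End F V) (D : LRDecomp F V d) : Prop :=
  ∀ i ≤ d, Submodule.map B (D.sub i) = D.sub (i + 1)

/-- `D` is the (A,B)-decomposition: it is lowered by `A` and raised by `B`. -/
def IsLRPairWith {d : ℕ} (A B : Module.End F V) (D : LRDecomp F V d) : Prop :=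
  Lowers A D ∧ Raises B D

/-- `(A,B,C)` is an LR triple of diameter `d`. -/
def IsLRTriple (d : ℕ) (A B C : Module.End F V) : Prop :=
  (∃ D : LRDecomp F V d, IsLRPairWith A B D) ∧
  (∃ D : LRDecomp F V d, IsLRPairWith B C D) ∧
  (∃ D : LRDecomp F V d, IsLRPairWith C A D)

/-- `X` is tridiagonal with respect to the decomposition `D`:
`X V_i ⊆ V_{i-1} + V_i + V_{i+1}` (note `V_{0-1} ⊔ V_0 = V_0` makes `ℕ`-subtraction correct). -/
def IsTridiagonal {d : ℕ} (X : Module.End F V) (D : LRDecomp F V d) : Prop :=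
  ∀ i, ∀ v ∈ D.sub i, X v ∈ D.sub (i - 1) ⊔ D.sub i ⊔ D.sub (i + 1)

/-- The tridiagonal space of the LR triple with decompositions `D₁, D₂, D₃`. -/
def tridiagSpace {d : ℕ} (D₁ D₂ D₃ : LRDecomp F V d) : Submodule F (Module.End F V) where
  carrier := {X | IsTridiagonal X D₁ ∧ IsTridiagonal X D₂ ∧ IsTridiagonal X D₃}
  add_mem' := by
    rintro X Y ⟨hX1, hX2, hX3⟩ ⟨hY1, hY2, hY3⟩
    exact ⟨fun i v hv => by simpa using add_mem (hX1 i v hv) (hY1 i v hv),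
           fun i v hv => by simpa using add_mem (hX2 i v hv) (hY2 i v hv),
           fun i v hv => by simpa using add_mem (hX3 i v hv) (hY3 i v hv)⟩
  zero_mem' :=
    ⟨fun i v _ => by simp,
     fun i v _ => by simp,
     fun i v _ => by simp⟩
  smul_mem' := by
    rintro c X ⟨hX1, hX2, hX3⟩
    exact ⟨fun i v hv => by simpa using Submodule.smul_mem _ c (hX1 i v hv),
           fun i v hv => by simpa using Submodule.smul_mem _ c (hX2 i v hv),
           fun i v hv => by simpa using Submodule.smul_mem _ c (hX3 i v hv)⟩

/-- `E` is the idempotent sequence of the decomposition `D`: each `E i` acts as the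
identity on `sub i` and as zero on `sub j` for `j ≠ i`. -/
def IsIdemSeq {d : ℕ} (D : LRDecomp F V d) (E : ℕ → Module.End F V) : Prop :=
  ∀ i, (∀ v ∈ D.sub i, E i v = v) ∧ ∀ j, j ≠ i → ∀ v ∈ D.sub j, E i v = 0

/-- Bipartite: all trace data `a_i = tr(C E_i)`, `a'_i = tr(A E'_i)`, `a''_i = tr(B E''_i)`
vanish, where `E, E', E''` are the idempotent data of the triple `(A,B,C)`. -/
def IsBipartite (d : ℕ) (A B C : Module.End F V)
    (E E' E'' : ℕ → Module.End F V) : Prop :=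
  ∀ i ≤ d, LinearMap.trace F V (C * E i) = 0 ∧
    LinearMap.trace F V (A * E' i) = 0 ∧ LinearMap.trace F V (B * E'' i) = 0

/-- An LR pair `(A,B)` has `q`-Weyl type. -/
def IsQWeylPair (q : F) (A B : Module.End F V) : Prop :=
  q ≠ 0 ∧ q ^ 2 ≠ 1 ∧ q • (A * B) - q⁻¹ • (B * A) = (q - q⁻¹) • (1 : Module.End F V)

/-- An LR triple `(A,B,C)` has `q`-Weyl type. -/
def IsQWeylTriple (q : F) (A B C : Module.End F V) : Prop :=
  IsQWeylPair q A B ∧ IsQWeylPair q B C ∧ IsQWeylPair q C A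

/-- `v` is an `(A,B)`-basis, relative to the `(A,B)`-decomposition `D`:
`v i ∈ sub i` is nonzero and `A v_i = v_{i-1}`. -/
def IsLRBasisFor {d : ℕ} (A : Module.End F V) (D : LRDecomp F V d) (v : ℕ → V) : Prop :=
  (∀ i ≤ d, v i ∈ D.sub i ∧ v i ≠ 0) ∧ ∀ i, 1 ≤ i → i ≤ d → A (v i) = v (i - 1)

/-- `v` is a `(B,A)`-style basis relative to the `(A,B)`-decomposition `D` of the
reversed pair: `v i ∈ sub (d-i)` is nonzero and the lowering map sends `v i ↦ v (i-1)`.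
(Used for `(C,B)`-bases relative to the `(B,C)`-decomposition, etc.) -/
def IsLRBasisRev {d : ℕ} (A : Module.End F V) (D : LRDecomp F V d) (v : ℕ → V) : Prop :=
  (∀ i ≤ d, v i ∈ D.sub (d - i) ∧ v i ≠ 0) ∧ ∀ i, 1 ≤ i → i ≤ d → A (v i) = v (i - 1)

/-- The transition matrix from the basis `u` to the basis `w` is upper triangular
Toeplitz with parameters `α`: `w j = ∑_{i ≤ j} α_{j-i} u_i`. -/
def IsToeplitzTransition (d : ℕ) (u w : ℕ → V) (α : ℕ → F) : Prop :=
  ∀ j ≤ d, w j = ∑ i ∈ Finset.range (j + 1), α (j - i) • u i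

/-- `φ` is the parameter sequence of the LR pair `(A,B)` with `(A,B)`-decomposition `D`:
`BA` acts on `V_i` as `φ i` for `1 ≤ i ≤ d`, with conventions `φ 0 = 0 = φ (d+1)`. -/
def IsParamSeq {d : ℕ} (A B : Module.End F V) (D : LRDecomp F V d) (φ : ℕ → F) : Prop :=
  φ 0 = 0 ∧ φ (d + 1) = 0 ∧ ∀ i, 1 ≤ i → i ≤ d → ∀ v ∈ D.sub i, B (A v) = φ i • v

/-!
Let `J` be the projection onto the even part `V₀ + V₂ + ⋯` of the `(A,B)`-decomposition. `B`
raises this decomposition, so it interchanges the ranges of `J` and `1 - J`; the point is that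
`C` does too. The flag `V₀ + ⋯ + Vᵢ` is the range of `A ^ (d - i)`, which is also a tail of the
`(C,A)`-decomposition (raised by `A`); since `C` lowers that decomposition, it moves the flag
up by at most one step. Dually, via `B` and the `(B,C)`-decomposition, `C` moves the flag
`Vᵢ + ⋯ + V_d` down by at most one step. So `C` is tridiagonal, and its diagonal vanishes
because `Eᵢ C Eᵢ = tr (C Eᵢ) • Eᵢ` for the rank-one projection `Eᵢ`. Reading the products from
the right, `C'J = γ_out CJ`, `B'CJ = β_in BCJ` and `A'BCJ = α_out ABCJ`, and symmetrically
for `A'C'B'J`.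
-/

section OffDiagonal

variable {S R : Type*} [CommSemiring S] [Ring R] [Algebra S R]

def IsOffDiagonal (J X : R) : Prop :=
  J * X * J = 0 ∧ (1 - J) * X * (1 - J) = 0

def blockRescale (J X : R) (a b : S) : R :=
  a • (X * J) + b • (X * (1 - J))

variable {J : R}

lemma blockRescale_mul_of_one_sub_mul_eq_zero {W : R} (hW : (1 - J) * W = 0) (X : R) (a b : S) :
    blockRescale J X a b * W = a • (X * W) := by
  have hJW : J * W = W := by rw [sub_mul, one_mul, sub_eq_zero] at hW; exact hW.symm
  rw [blockRescale, add_mul, smul_mul_assoc, smul_mul_assoc, mul_assoc, mul_assoc, hW, hJW,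
    mul_zero, smul_zero, add_zero]

lemma blockRescale_mul_of_mul_eq_zero {W : R} (hW : J * W = 0) (X : R) (a b : S) :
    blockRescale J X a b * W = b • (X * W) := by
  have hJW : (1 - J) * W = W := by rw [sub_mul, one_mul, hW, sub_zero]
  rw [blockRescale, add_mul, smul_mul_assoc, smul_mul_assoc, mul_assoc, mul_assoc, hW, hJW,
    mul_zero, smul_zero, zero_add]

theorem IsOffDiagonal.blockRescale_mul_mul_mul {Y Z : R} (hJ : IsIdempotentElem J)
    (hY : IsOffDiagonal J Y) (hZ : IsOffDiagonal J Z) (X : R) (a₁ a₂ b₁ b₂ c₁ c₂ : S) :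
    blockRescale J X a₁ a₂ * blockRescale J Y b₁ b₂ * blockRescale J Z c₁ c₂ * J =
      (a₁ * b₂ * c₁) • (X * Y * Z * J) := by
  have hZJ : J * (Z * J) = 0 := by rw [← mul_assoc, hZ.1]
  have hYZJ : (1 - J) * (Y * (Z * J)) = 0 := by
    have : Z * J = (1 - J) * (Z * J) := by rw [sub_mul, one_mul, hZJ, sub_zero]
    rw [this, ← mul_assoc, ← mul_assoc, hY.2, zero_mul]
  rw [mul_assoc, mul_assoc, blockRescale_mul_of_one_sub_mul_eq_zero hJ.one_sub_mul_self,
    mul_smul_comm, blockRescale_mul_of_mul_eq_zero hZJ, mul_smul_comm, mul_smul_comm,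
    blockRescale_mul_of_one_sub_mul_eq_zero hYZJ, smul_smul, smul_smul]
  simp only [mul_assoc]
  congr 1
  ring

end OffDiagonal

open Module Finset

lemma LinearMap.IsProj.mul_mul_eq_trace_smul [FiniteDimensional F V] {p : Submodule F V}
    {E : Module.End F V} (hE : LinearMap.IsProj p E) (hp : finrank F p = 1)
    (X : Module.End F V) : E * X * E = LinearMap.trace F V (X * E) • E := by
  obtain ⟨c, hc, -⟩ := LinearMap.existsUnique_eq_smul_id_of_finrank_eq_one hp
    ((E * X).restrict fun v _ => hE.map_mem (X v))
  have hEXE : E * X * E = c • E := by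
    ext v
    simpa using congr(Subtype.val ($hc ⟨E v, hE.map_mem v⟩))
  have htrace : LinearMap.trace F V (X * E) = c := by
    rw [← hE.isIdempotentElem.eq, ← mul_assoc, LinearMap.trace_mul_comm, ← mul_assoc, hEXE,
      map_smul, hE.trace, hp, Nat.cast_one, smul_eq_mul, mul_one]
  rw [htrace, hEXE]

lemma Finset.sum_range_two_mul_eq_sum_filter {M : Type*} [AddCommMonoid M] (f : ℕ → M)
    (d : ℕ) :
    ∑ j ∈ range (d / 2 + 1), f (2 * j) = ∑ i ∈ (range (d + 1)).filter (· % 2 = 0), f i := by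
  rw [← sum_image fun a _ b _ (h : 2 * a = 2 * b) => by omega]
  congr 1
  ext i
  simp only [mem_image, mem_range, mem_filter]
  constructor
  · rintro ⟨j, hj, rfl⟩
    omega
  · exact fun h => ⟨i / 2, by omega, by omega⟩

variable {d : ℕ}

namespace LRDecomp

variable (D : LRDecomp F V d)

lemma iSup_sub_eq_top : ⨆ i, D.sub i = ⊤ := by
  refine eq_top_iff.2 ?_
  rw [← D.isInternal.submodule_iSup_eq_top]
  exact iSup_le fun i => le_iSup D.sub i.val

lemma eq_top_of_sub_le {p : Submodule F V} (h : ∀ i ≤ d, D.sub i ≤ p) : p = ⊤ := by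
  refine eq_top_iff.2 (D.iSup_sub_eq_top ▸ iSup_le fun i => ?_)
  rcases le_or_gt i d with hi | hi
  · exact h i hi
  · simp [D.eq_bot_of_gt i hi]

lemma endomorphism_ext {f g : Module.End F V} (h : ∀ i ≤ d, ∀ v ∈ D.sub i, f v = g v) :
    f = g :=
  LinearMap.eqLocus_eq_top.1 (D.eq_top_of_sub_le fun i hi v hv => h i hi v hv)

end LRDecomp

namespace IsIdemSeq

variable {D : LRDecomp F V d} {E : ℕ → Module.End F V}

lemma apply_mem (hE : IsIdemSeq D E) (i : ℕ) (v : V) : E i v ∈ D.sub i := by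
  suffices h : (D.sub i).comap (E i) = ⊤ from Submodule.mem_comap.1 (h ▸ Submodule.mem_top)
  refine D.eq_top_of_sub_le fun j _ w hw => ?_
  obtain rfl | hji := eq_or_ne j i
  · simpa [(hE j).1 w hw] using hw
  · simp [(hE i).2 j hji w hw]

lemma isProj (hE : IsIdemSeq D E) (i : ℕ) : LinearMap.IsProj (D.sub i) (E i) :=
  ⟨hE.apply_mem i, (hE i).1⟩

lemma mul_eq_zero_of_ne (hE : IsIdemSeq D E) {i j : ℕ} (hij : i ≠ j) : E i * E j = 0 :=
  LinearMap.ext fun v => (hE i).2 j hij.symm _ (hE.apply_mem j v)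

lemma apply_eq_zero_of_mem_iSup (hE : IsIdemSeq D E) {p : ℕ → Prop} {k : ℕ} (hk : ¬ p k)
    {v : V} (hv : v ∈ ⨆ (j) (_ : p j), D.sub j) : E k v = 0 := by
  suffices h : ⨆ (j) (_ : p j), D.sub j ≤ LinearMap.ker (E k) from h hv
  exact iSup₂_le fun j hj w hw => (hE k).2 j (by rintro rfl; exact hk hj) w hw

lemma sum_eq_one (hE : IsIdemSeq D E) : ∑ i ∈ range (d + 1), E i = 1 := by
  refine D.endomorphism_ext fun j hj v hv => ?_
  rw [LinearMap.sum_apply, sum_eq_single_of_mem j (mem_range.2 (by omega))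
    fun i _ hij => (hE i).2 j hij.symm v hv]
  exact (hE j).1 v hv

lemma isIdempotentElem_sum (hE : IsIdemSeq D E) (s : Finset ℕ) :
    IsIdempotentElem (∑ i ∈ s, E i) := by
  rw [IsIdempotentElem, sum_mul_sum]
  refine sum_congr rfl fun i hi => ?_
  rw [sum_eq_single_of_mem i hi fun j _ hji => hE.mul_eq_zero_of_ne hji.symm]
  exact ((hE.isProj i).isIdempotentElem).eq

lemma isOffDiagonal_sum_filter (hE : IsIdemSeq D E) (p : ℕ → Prop) [DecidablePred p]
    {X : Module.End F V}
    (hX : ∀ i ≤ d, ∀ j ≤ d, (p i ↔ p j) → ∀ v ∈ D.sub i, E j (X v) = 0) :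
    IsOffDiagonal (∑ i ∈ (range (d + 1)).filter p, E i) X := by
  have hblock : ∀ s ⊆ range (d + 1), (∀ i ∈ s, ∀ j ∈ s, p i ↔ p j) →
      (∑ j ∈ s, E j) * X * ∑ i ∈ s, E i = 0 := by
    intro s hs hps
    simp only [sum_mul, mul_sum]
    refine sum_eq_zero fun i hi => sum_eq_zero fun j hj => LinearMap.ext fun v => ?_
    exact hX i (by simpa using hs hi) j (by simpa using hs hj) (hps i hi j hj) _
      (hE.apply_mem i v)
  have hcompl : 1 - ∑ i ∈ (range (d + 1)).filter p, E i =
      ∑ i ∈ (range (d + 1)).filter (¬ p ·), E i := by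
    rw [← hE.sum_eq_one, ← sum_filter_add_sum_filter_not _ p, add_sub_cancel_left]
  refine ⟨hblock _ (filter_subset _ _) ?_, hcompl ▸ hblock _ (filter_subset _ _) ?_⟩ <;>
  · intro i hi j hj
    simp only [mem_filter] at hi hj
    tauto

end IsIdemSeq

section Flags

variable {D : LRDecomp F V d} {X Y : Module.End F V}

lemma Lowers.map_sub_succ_le (hX : Lowers X D) (j : ℕ) : (D.sub (j + 1)).map X ≤ D.sub j := by
  rcases lt_or_ge j d with hj | hj
  · exact (hX.2 j hj).le
  · simp [D.eq_bot_of_gt (j + 1) (by omega)]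

lemma Raises.map_sub (hX : Raises X D) (j : ℕ) : (D.sub j).map X = D.sub (j + 1) := by
  rcases le_or_gt j d with hj | hj
  · exact hX j hj
  · rw [D.eq_bot_of_gt j hj, D.eq_bot_of_gt (j + 1) (by omega), Submodule.map_bot]

lemma Lowers.range_pow (hX : Lowers X D) (m : ℕ) :
    LinearMap.range (X ^ m) = ⨆ (j) (_ : j + m ≤ d), D.sub j := by
  induction m with
  | zero =>
    rw [pow_zero, Module.End.one_eq_id, LinearMap.range_id]
    exact (D.eq_top_of_sub_le fun i hi => le_iSup₂_of_le i hi le_rfl).symm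
  | succ m ih =>
    rw [pow_succ', Module.End.mul_eq_comp, LinearMap.range_comp, ih]
    simp only [Submodule.map_iSup]
    refine le_antisymm (iSup₂_le fun j hj => ?_) (iSup₂_le fun j hj => ?_)
    · rcases j with _ | j
      · simp [hX.1]
      · exact le_iSup₂_of_le j (by omega) (hX.map_sub_succ_le j)
    · exact le_iSup₂_of_le (j + 1) (by omega) (hX.2 j (by omega)).ge

lemma Raises.range_pow (hX : Raises X D) (m : ℕ) :
    LinearMap.range (X ^ m) = ⨆ (j) (_ : m ≤ j), D.sub j := by
  induction m with
  | zero =>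
    rw [pow_zero, Module.End.one_eq_id, LinearMap.range_id]
    exact (D.eq_top_of_sub_le fun i _ => le_iSup₂_of_le i (Nat.zero_le i) le_rfl).symm
  | succ m ih =>
    rw [pow_succ', Module.End.mul_eq_comp, LinearMap.range_comp, ih]
    simp only [Submodule.map_iSup, hX.map_sub]
    refine le_antisymm (iSup₂_le fun j hj => ?_) (iSup₂_le fun j hj => ?_)
    · exact le_iSup₂_of_le (j + 1) (by omega) le_rfl
    · obtain ⟨j, rfl⟩ : ∃ k, j = k + 1 := ⟨j - 1, by omega⟩
      exact le_iSup₂_of_le j (by omega) le_rfl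

lemma Lowers.map_range_pow_succ_le (hX : Lowers X D) (hY : Raises Y D) (m : ℕ) :
    (LinearMap.range (X ^ (m + 1))).map Y ≤ LinearMap.range (X ^ m) := by
  rw [hX.range_pow, hX.range_pow, Submodule.map_iSup]
  refine iSup_le fun j => ?_
  rw [Submodule.map_iSup]
  exact iSup_le fun hj => le_iSup₂_of_le (j + 1) (by omega) (hY.map_sub j).le

lemma Raises.map_range_pow_succ_le (hX : Raises X D) (hY : Lowers Y D) (m : ℕ) :
    (LinearMap.range (X ^ (m + 1))).map Y ≤ LinearMap.range (X ^ m) := by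
  rw [hX.range_pow, hX.range_pow, Submodule.map_iSup]
  refine iSup_le fun j => ?_
  rw [Submodule.map_iSup]
  refine iSup_le fun hj => ?_
  obtain ⟨j, rfl⟩ : ∃ k, j = k + 1 := ⟨j - 1, by omega⟩
  exact le_iSup₂_of_le j (by omega) (hY.map_sub_succ_le j)

end Flags

section LRTriple

variable {A B C : Module.End F V} {DAB DBC DCA : LRDecomp F V d} {E : ℕ → Module.End F V}

lemma IsIdemSeq.apply_apply_eq_zero_of_add_one_lt (hE : IsIdemSeq DAB E)
    (hAB : IsLRPairWith A B DAB) (hCA : IsLRPairWith C A DCA) {i k : ℕ} (hik : i + 1 < k)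
    (hk : k ≤ d) {v : V} (hv : v ∈ DAB.sub i) : E k (C v) = 0 := by
  have hv' : v ∈ LinearMap.range (A ^ (d - i - 1 + 1)) := by
    rw [hAB.1.range_pow]
    exact Submodule.mem_iSup_of_mem i (Submodule.mem_iSup_of_mem (by omega) hv)
  have hCv := hCA.2.map_range_pow_succ_le hCA.1 _ (Submodule.mem_map_of_mem hv')
  rw [hAB.1.range_pow] at hCv
  exact hE.apply_eq_zero_of_mem_iSup (by omega) hCv

lemma IsIdemSeq.apply_apply_eq_zero_of_lt_sub_one (hE : IsIdemSeq DAB E)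
    (hAB : IsLRPairWith A B DAB) (hBC : IsLRPairWith B C DBC) {i k : ℕ} (hki : k < i - 1)
    {v : V} (hv : v ∈ DAB.sub i) : E k (C v) = 0 := by
  have hv' : v ∈ LinearMap.range (B ^ (i - 1 + 1)) := by
    rw [hAB.2.range_pow]
    exact Submodule.mem_iSup_of_mem i (Submodule.mem_iSup_of_mem (by omega) hv)
  have hCv := hBC.1.map_range_pow_succ_le hBC.2 _ (Submodule.mem_map_of_mem hv')
  rw [hAB.2.range_pow] at hCv
  exact hE.apply_eq_zero_of_mem_iSup (by omega) hCv

lemma IsIdemSeq.apply_apply_self_eq_zero_of_trace [FiniteDimensional F V] (hE : IsIdemSeq DAB E)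
    {i : ℕ} (hi : i ≤ d) (htrace : LinearMap.trace F V (C * E i) = 0) {v : V}
    (hv : v ∈ DAB.sub i) : E i (C v) = 0 := by
  have h := (hE.isProj i).mul_mul_eq_trace_smul (DAB.finrank_eq_one i hi) C
  rw [htrace, zero_smul] at h
  simpa [(hE i).1 v hv] using congr($h v)

lemma IsIdemSeq.isOffDiagonal_of_raises (hE : IsIdemSeq DAB E) (hB : Raises B DAB) :
    IsOffDiagonal (∑ i ∈ (range (d + 1)).filter (· % 2 = 0), E i) B :=
  hE.isOffDiagonal_sum_filter _ fun i hi j _ hij v hv =>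
    (hE j).2 (i + 1) (by omega) _ (hB i hi ▸ Submodule.mem_map_of_mem hv)

lemma IsIdemSeq.isOffDiagonal_of_trace_eq_zero [FiniteDimensional F V] (hE : IsIdemSeq DAB E)
    (hAB : IsLRPairWith A B DAB) (hBC : IsLRPairWith B C DBC) (hCA : IsLRPairWith C A DCA)
    (htrace : ∀ i ≤ d, LinearMap.trace F V (C * E i) = 0) :
    IsOffDiagonal (∑ i ∈ (range (d + 1)).filter (· % 2 = 0), E i) C :=
  hE.isOffDiagonal_sum_filter _ fun i hi j hj hij v hv => by
    obtain rfl | hij | hji : j = i ∨ i + 1 < j ∨ j < i - 1 := by omega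
    · exact hE.apply_apply_self_eq_zero_of_trace hi (htrace j hi) hv
    · exact hE.apply_apply_eq_zero_of_add_one_lt hAB hCA hij hj hv
    · exact hE.apply_apply_eq_zero_of_lt_sub_one hAB hBC hji hv

end LRTriple

theorem stmt16_general
    {F : Type*} [Field F] {V : Type*} [AddCommGroup V] [Module F V]
    [FiniteDimensional F V] {d : ℕ}
    (A B C : Module.End F V) (DAB DBC DCA : LRDecomp F V d)
    (hAB : IsLRPairWith A B DAB) (hBC : IsLRPairWith B C DBC) (hCA : IsLRPairWith C A DCA)
    (E E' E'' : ℕ → Module.End F V)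
    (hE : IsIdemSeq DAB E)
    (hbip : IsBipartite d A B C E E' E'')
    (J : Module.End F V) (hJ : J = ∑ j ∈ Finset.range (d / 2 + 1), E (2 * j))
    (aOut aIn bOut bIn cOut cIn : F)
    (haOut : aOut ≠ 0) (hbOut : bOut ≠ 0) (hbIn : bIn ≠ 0)
    (hcOut : cOut ≠ 0) (hcIn : cIn ≠ 0)
    (A' B' C' : Module.End F V)
    (hA' : A' = aOut • (A * J) + aIn • (A * (1 - J)))
    (hB' : B' = bOut • (B * J) + bIn • (B * (1 - J)))
    (hC' : C' = cOut • (C * J) + cIn • (C * (1 - J))) :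
    A' * B' * C' * J = (aOut * bIn * cOut) • (A * B * C * J) ∧
    A' * C' * B' * J = (aOut * cIn * bOut) • (A * C * B * J) ∧
    (∃ e : F, e ≠ 0 ∧ A' * B' * C' * J = e • (A * B * C * J)) ∧
    (∃ e : F, e ≠ 0 ∧ A' * C' * B' * J = e • (A * C * B * J)) := by
  rw [Finset.sum_range_two_mul_eq_sum_filter E d] at hJ
  subst hJ hA' hB' hC'
  have hJ := hE.isIdempotentElem_sum ((range (d + 1)).filter (· % 2 = 0))
  have hB := hE.isOffDiagonal_of_raises hAB.2
  have hC := hE.isOffDiagonal_of_trace_eq_zero hAB hBC hCA fun i hi => (hbip i hi).1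
  have hABC := hB.blockRescale_mul_mul_mul hJ hC A aOut aIn bOut bIn cOut cIn
  have hACB := hC.blockRescale_mul_mul_mul hJ hB A aOut aIn cOut cIn bOut bIn
  exact ⟨hABC, hACB, ⟨_, mul_ne_zero (mul_ne_zero haOut hbIn) hcOut, hABC⟩,
    ⟨_, mul_ne_zero (mul_ne_zero haOut hcIn) hbOut, hACB⟩⟩

theorem stmt16
    {F : Type*} [Field F] {V : Type*} [AddCommGroup V] [Module F V]
    [FiniteDimensional F V] {d : ℕ} (hdim : Module.finrank F V = d + 1)
    (A B C : Module.End F V) (DAB DBC DCA : LRDecomp F V d)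
    (hAB : IsLRPairWith A B DAB) (hBC : IsLRPairWith B C DBC) (hCA : IsLRPairWith C A DCA)
    (E E' E'' : ℕ → Module.End F V)
    (hE : IsIdemSeq DAB E) (hE' : IsIdemSeq DBC E') (hE'' : IsIdemSeq DCA E'')
    (hbip : IsBipartite d A B C E E' E'')
    (J : Module.End F V) (hJ : J = ∑ j ∈ Finset.range (d / 2 + 1), E (2 * j))
    (aOut aIn bOut bIn cOut cIn : F)
    (haOut : aOut ≠ 0) (haIn : aIn ≠ 0) (hbOut : bOut ≠ 0) (hbIn : bIn ≠ 0)
    (hcOut : cOut ≠ 0) (hcIn : cIn ≠ 0)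
    (A' B' C' : Module.End F V)
    (hA' : A' = aOut • (A * J) + aIn • (A * (1 - J)))
    (hB' : B' = bOut • (B * J) + bIn • (B * (1 - J)))
    (hC' : C' = cOut • (C * J) + cIn • (C * (1 - J))) :
    A' * B' * C' * J = (aOut * bIn * cOut) • (A * B * C * J) ∧
    A' * C' * B' * J = (aOut * cIn * bOut) • (A * C * B * J) ∧
    (∃ e : F, e ≠ 0 ∧ A' * B' * C' * J = e • (A * B * C * J)) ∧
    (∃ e : F, e ≠ 0 ∧ A' * C' * B' * J = e • (A * C * B * J)) :=
  stmt16_general A B C DAB DBC DCA hAB hBC hCA E E' E'' hE hbip J hJ aOut aIn bOut bIn cOut cIn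
    haOut hbOut hbIn hcOut hcIn A' B' C' hA' hB' hC'
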